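/- In fact a stronger statement holds: for all acts f ∈ M, p ∈ (0,1), and act h, safety_{pM+(1-p)h}(pf+(1-p)h) = p · safety_M(f). -/
import Mathlib


open Finset

noncomputable def safety {S : Type*} [Fintype S] [Nonempty S]
    (M : Finset (S → ℝ)) (hM : M.Nonempty) (f : S → ℝ) : ℝ :=
  univ.inf' univ_nonempty (fun s => f s - M.inf' hM (fun a => a s))

lemma inf'_affine {ι : Type*} (s : Finset ι) (hs : s.Nonempty) (g : ι → ℝ)
    (c d : ℝ) (hc : 0 ≤ c) :
    s.inf' hs (fun i => c * g i + d) = c * s.inf' hs g + d := by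
  obtain ⟨i0, hi0, h0⟩ := s.exists_mem_eq_inf' hs g
  apply le_antisymm
  · calc s.inf' hs (fun i => c * g i + d) ≤ c * g i0 + d := inf'_le _ hi0
    _ = c * s.inf' hs g + d := by rw [h0]
  · apply le_inf'
    intro i hi
    have : s.inf' hs g ≤ g i := inf'_le _ hi
    nlinarith

theorem safety_mix_eq {S : Type*} [Fintype S] [Nonempty S]
    (M : Finset (S → ℝ)) (hM : M.Nonempty) (f h : S → ℝ) (hf : f ∈ M)
    (p : ℝ) (hp0 : 0 < p) (hp1 : p < 1) :
    safety (M.image (fun a => fun s => p * a s + (1 - p) * h s)) (hM.image _)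
        (fun s => p * f s + (1 - p) * h s) = p * safety M hM f := by
  unfold safety
  have key : ∀ s : S,
      (M.image (fun a => fun s => p * a s + (1 - p) * h s)).inf'
        (hM.image _) (fun a => a s)
      = p * M.inf' hM (fun a => a s) + (1 - p) * h s := by
    intro s
    rw [inf'_image]
    exact inf'_affine M hM (fun a => a s) p ((1 - p) * h s) hp0.le
  have : (fun s => (p * f s + (1 - p) * h s) -
      (M.image (fun a => fun s => p * a s + (1 - p) * h s)).inf'
        (hM.image _) (fun a => a s))
      = fun s => p * (f s - M.inf' hM (fun a => a s)) + 0 := by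
    funext s
    rw [key s]
    ring
  rw [this, inf'_affine _ _ _ p 0 hp0.le, add_zero]
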